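/- arXiv:math/0503627 — 6 statements merged into one kernel-verified Lean document; each statement's English description precedes it below -/
import Mathlib

section
/- Let 0 < s < d, |ν| < s, and define 4a² = d² + s² − 2ν² − 2√((d²−ν²)(s²−ν²)) and 4b² = d² + s² − 2ν² + 2√((d²−ν²)(s²−ν²)) with a, b > 0. Then (d−s)/2 ≤ a ≤ (d+s)/2 and (d−s)/2 ≤ b ≤ (d+s)/2. -/
set_option maxHeartbeats 1000000 in
theorem offdiagonal_entries_bounds
    (s d ν a b : ℝ) (hs : 0 < s) (hsd : s < d) (hν : |ν| < s)
    (ha : 0 < a) (hb : 0 < b)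
    (ha2 : 4*a^2 = d^2 + s^2 - 2*ν^2 - 2*Real.sqrt ((d^2 - ν^2)*(s^2 - ν^2)))
    (hb2 : 4*b^2 = d^2 + s^2 - 2*ν^2 + 2*Real.sqrt ((d^2 - ν^2)*(s^2 - ν^2))) :
    ((d - s)/2 ≤ a ∧ a ≤ (d + s)/2) ∧ ((d - s)/2 ≤ b ∧ b ≤ (d + s)/2) := by
  have hν2 : ν^2 < s^2 := by nlinarith [sq_abs ν, abs_nonneg ν]
  have hsd2 : s^2 < d^2 := by nlinarith
  have hd0 : 0 < d := hs.trans hsd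
  set x := Real.sqrt (d^2 - ν^2) with hxdef
  set y := Real.sqrt (s^2 - ν^2) with hydef
  have hx2 : x^2 = d^2 - ν^2 := Real.sq_sqrt (by linarith)
  have hy2 : y^2 = s^2 - ν^2 := Real.sq_sqrt (by linarith)
  have hx0 : 0 < x := Real.sqrt_pos.mpr (by linarith)
  have hy0 : 0 < y := Real.sqrt_pos.mpr (by linarith)
  have hxd : x ≤ d := by
    calc x ≤ Real.sqrt (d^2) := Real.sqrt_le_sqrt (by nlinarith [sq_nonneg ν])
    _ = d := Real.sqrt_sq hd0.le
  have hys : y ≤ s := by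
    calc y ≤ Real.sqrt (s^2) := Real.sqrt_le_sqrt (by nlinarith [sq_nonneg ν])
    _ = s := Real.sqrt_sq hs.le
  have hyx : y ≤ x := Real.sqrt_le_sqrt (by linarith)
  have hR : Real.sqrt ((d^2 - ν^2)*(s^2 - ν^2)) = x * y := by
    rw [hxdef, hydef, ← Real.sqrt_mul (by linarith)]
  rw [hR] at ha2 hb2
  have h2a : 2 * a = x - y := by
    have h1 : (2*a - (x - y)) * (2*a + (x - y)) = 0 := by
      linear_combination ha2 - hx2 - hy2
    rcases mul_eq_zero.mp h1 with h | h
    · linarith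
    · linarith
  have h2b : 2 * b = x + y := by
    have h1 : (2*b - (x + y)) * (2*b + (x + y)) = 0 := by
      linear_combination hb2 - hx2 - hy2
    rcases mul_eq_zero.mp h1 with h | h
    · linarith
    · linarith
  have hsxdy : d * y ≤ s * x := by
    have h : (s*x)^2 - (d*y)^2 = ν^2*(d^2-s^2) := by
      linear_combination s^2*hx2 - d^2*hy2
    have h2 : (0:ℝ) ≤ ν^2*(d^2-s^2) := mul_nonneg (sq_nonneg ν) (by linarith)
    have hsq : (d*y)^2 ≤ (s*x)^2 := by linarith
    exact (pow_le_pow_iff_left₀ (by positivity) (by positivity) two_ne_zero).mp hsq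
  have hkey : d - s ≤ x - y := by
    have h : (x + s)^2 - (d + y)^2 = 2*(s*x - d*y) := by
      linear_combination hx2 - hy2
    have hsq : (d + y)^2 ≤ (x + s)^2 := by linarith
    have := (pow_le_pow_iff_left₀ (by positivity) (by positivity) two_ne_zero).mp hsq
    linarith
  refine ⟨⟨by linarith, by linarith⟩, ⟨by linarith, by linarith⟩⟩
end

section
/- Let 0 < s < d, 0 ≤ |ν| < s, ε = ±1, and define τ(ν,ε) = (ε√((d²−ν²)(s²−ν²)) − ν²)/d² and τ = εs/d. Then |τ(ν,ε)| ≤ |τ| = s/d < 1. -/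
theorem tau_bound
    (s d ν ε : ℝ) (hs : 0 < s) (hsd : s < d) (hν : |ν| < s)
    (hε : ε = 1 ∨ ε = -1) :
    let τνε : ℝ := (ε * Real.sqrt ((d^2 - ν^2)*(s^2 - ν^2)) - ν^2) / d^2
    let τ : ℝ := ε * s / d
    |τνε| ≤ |τ| ∧ |τ| = s/d ∧ s/d < 1 := by
  intro τνε τ
  have hd : 0 < d := hs.trans hsd
  have hν2 : ν^2 < s^2 := by
    have := sq_abs ν
    nlinarith [abs_nonneg ν]
  have hνd : ν^2 < d^2 := by nlinarith
  have hA0 : 0 ≤ (d^2 - ν^2)*(s^2 - ν^2) := mul_nonneg (by linarith) (by linarith)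
  set A := Real.sqrt ((d^2 - ν^2)*(s^2 - ν^2)) with hA
  have hAnn : 0 ≤ A := Real.sqrt_nonneg _
  have hAsq : A^2 = (d^2 - ν^2)*(s^2 - ν^2) := Real.sq_sqrt hA0
  have hkey : A ≤ s*d - ν^2 := by
    have h1 : A^2 ≤ (s*d - ν^2)^2 := by nlinarith [sq_nonneg (ν*(d-s))]
    have h2 : 0 ≤ s*d - ν^2 := by nlinarith
    nlinarith
  have habsε : |ε| = 1 := by rcases hε with h | h <;> simp [h]
  have htau : |τ| = s/d := by
    simp only [τ]
    rw [abs_div, abs_mul, habsε, one_mul, abs_of_pos hd, abs_of_pos hs]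
  refine ⟨?_, htau, (div_lt_one hd).mpr hsd⟩
  rw [htau]
  have hεA : |ε * A| = A := by rw [abs_mul, habsε, one_mul, abs_of_nonneg hAnn]
  have hbound : |ε * A - ν^2| ≤ s * d := by
    rw [abs_sub_le_iff]
    constructor
    · have : ε * A ≤ A := by
        calc ε * A ≤ |ε * A| := le_abs_self _
        _ = A := hεA
      nlinarith [sq_nonneg ν]
    · have : -A ≤ ε * A := by
        have := neg_abs_le (ε * A); rw [hεA] at this; linarith
      nlinarith [sq_nonneg ν]
  have : |τνε| = |ε * A - ν^2| / d^2 := by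
    simp only [τνε, abs_div, abs_of_pos (by positivity : (0:ℝ) < d^2)]
    rw [hA]
  rw [this]
  rw [div_le_div_iff₀ (by positivity) hd]
  nlinarith
end

section
/- Let 0 < s < d, 0 ≤ |ν| < s, ε ∈ {−1,1}, τ(ν,ε) = (ε√((d²−ν²)(s²−ν²)) − ν²)/d², τ = εs/d. For complex z with |z| < 1 define f(z) = 1 + τ(ν,ε)z + ((1−z)(1−τ²z))^{1/2}, where the square root branch is positive for −1 < z < 1. Then |f(z)| ≥ (1 + τ(ν,ε))²/4 ≥ (1 − s/d)²/4 = (d−s)²/(4d²). -/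
open Metric Set

lemma mul_mem_slitPlane_of_re_pos {u v : ℂ} (hu : 0 < u.re) (hv : 0 < v.re) :
    u * v ∈ Complex.slitPlane := by
  rw [Complex.mem_slitPlane_iff]
  by_contra h
  push_neg at h
  obtain ⟨h1, h2⟩ := h
  rw [Complex.mul_re] at h1
  rw [Complex.mul_im] at h2
  have h3 := mul_le_mul_of_nonneg_left h1 hu.le
  have h4 : u.im * (u.re * v.im + u.im * v.re) = 0 := by rw [h2, mul_zero]
  nlinarith [mul_pos (mul_pos hu hu) hv, mul_nonneg (mul_self_nonneg u.im) hv.le]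

set_option maxHeartbeats 2000000 in
theorem f_lower_bound
    (s d ν ε : ℝ) (hs : 0 < s) (hsd : s < d) (hν : |ν| < s)
    (hε : ε = 1 ∨ ε = -1) :
    let τνε : ℝ := (ε * Real.sqrt ((d^2 - ν^2)*(s^2 - ν^2)) - ν^2) / d^2
    let τ : ℝ := ε * s / d
    let f : ℂ → ℂ := fun z =>
      1 + (τνε : ℂ) * z + ((1 - z) * (1 - (τ : ℂ)^2 * z)) ^ ((1 : ℂ)/2)
    ∀ z : ℂ, ‖z‖ < 1 →
      (1 + τνε)^2 / 4 ≤ ‖f z‖ ∧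
      (d - s)^2 / (4*d^2) ≤ (1 + τνε)^2 / 4 := by
  intro τνε τ f
  have hceq : τνε = (ε * Real.sqrt ((d^2 - ν^2)*(s^2 - ν^2)) - ν^2) / d^2 := rfl
  have hτeq : τ = ε * s / d := rfl
  have hfeq : ∀ z : ℂ, f z = 1 + (τνε : ℂ) * z
      + ((1 - z) * (1 - (τ : ℂ)^2 * z)) ^ ((1 : ℂ)/2) := fun _ => rfl
  clear_value τνε τ f
  have hd : 0 < d := hs.trans hsd
  have hd2 : (0:ℝ) < d^2 := by positivity
  have hν2 : ν^2 < s^2 := by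
    have := abs_lt.mp hν
    nlinarith [this.1, this.2]
  have hs2d2 : s^2 < d^2 := by nlinarith
  obtain ⟨S, hSdef⟩ : ∃ x : ℝ, Real.sqrt ((d^2 - ν^2)*(s^2 - ν^2)) = x := ⟨_, rfl⟩
  rw [hSdef] at hceq
  have hε2 : ε^2 = 1 := by rcases hε with h | h <;> rw [h] <;> norm_num
  have hS0 : 0 ≤ S := hSdef ▸ Real.sqrt_nonneg _
  have hεS : ε * S ≤ S := by
    rcases hε with h | h <;> rw [h] <;> nlinarith
  have hS2 : S^2 = (d^2 - ν^2)*(s^2 - ν^2) := by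
    rw [← hSdef]; exact Real.sq_sqrt (by nlinarith)
  have hSA : S < d^2 - ν^2 := by nlinarith
  have hSds : S ≤ d*s := by nlinarith [mul_pos hd hs]
  have hT : 0 < d*s - ν^2 := by nlinarith [mul_pos hd hs]
  have hsqT : S^2 ≤ (d*s - ν^2)^2 := by rw [hS2]; nlinarith [sq_nonneg (ν*(d-s))]
  have hSdsν : S ≤ d*s - ν^2 := by nlinarith [hS0, hT, hsqT]
  obtain ⟨K, hKdef⟩ : ∃ x : ℝ, x = ((d^2 - ν^2) + (s^2 - ν^2))/2 + ε*S := ⟨_, rfl⟩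
  have hK : 0 < K := by
    rcases hε with h | h <;> rw [hKdef, h] <;> nlinarith
  have hc : τνε * d^2 = ε*S - ν^2 := by rw [hceq]; field_simp
  have htd : τ * d = ε * s := by rw [hτeq]; field_simp
  have hτ2 : τ^2 * d^2 = s^2 := by linear_combination (τ*d + ε*s)*htd + s^2*hε2
  have hτlt : τ^2 < 1 := by nlinarith [hτ2]
  have hτ0 : 0 ≤ τ^2 := sq_nonneg τ
  have h1c : (1 + τνε) * d^2 = (d^2 - ν^2) + ε*S := by linear_combination hc
  have hcpos : 0 < 1 + τνε := by
    have hpos : 0 < (d^2 - ν^2) + ε*S := by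
      rcases hε with h | h <;> rw [h] <;> nlinarith
    nlinarith [h1c]
  have hclt1 : τνε < 1 := by nlinarith [hc, hεS, hSds, sq_nonneg ν, mul_pos hd hs]
  have hcK : (1 + τνε)^2 * (d^2)^2 = 2*K*(d^2 - ν^2) := by
    rw [hKdef]
    linear_combination ((1 + τνε)*d^2 + (d^2 - ν^2) + ε*S) * h1c + S^2 * hε2 + hS2
  have hsecond : (d - s)^2/(4*d^2) ≤ (1 + τνε)^2/4 := by
    have hlow : (d - s)*d ≤ (1 + τνε)*d^2 := by
      rw [h1c]
      rcases hε with h | h <;> rw [h] <;> nlinarith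
    have h0 : 0 ≤ (d - s)*d := by nlinarith
    have hsq := mul_self_le_mul_self h0 hlow
    rw [div_le_div_iff₀ (by positivity) (by norm_num)]
    nlinarith [hsq, hd2, sq_nonneg (1 + τνε)]
  have er1 : d^2*(2*τνε + 1 + τ^2) = 2*K := by
    rw [hKdef]; linear_combination 2*hc + hτ2
  have er2 : (d^2)^2*(τνε^2 - τ^2) = -(2*K*ν^2) := by
    rw [hKdef]
    linear_combination (τνε*d^2 + ε*S - ν^2)*hc - d^2*hτ2 + S^2*hε2 + hS2
  -- complex part
  set g : ℂ → ℂ := fun z => 1 + (τνε:ℂ)*z - ((1 - z) * (1 - (τ:ℂ)^2*z)) ^ ((1:ℂ)/2) with hgdef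
  have hre1 : ∀ z : ℂ, ‖z‖ < 1 → 0 < (1 - z).re := by
    intro z hz
    have h1 : |z.re| ≤ ‖z‖ := Complex.abs_re_le_norm z
    have h2 := abs_le.mp h1
    simp only [Complex.sub_re, Complex.one_re]
    linarith only [h2.2, hz]
  have hre2 : ∀ z : ℂ, ‖z‖ < 1 → 0 < (1 - (τ:ℂ)^2*z).re := by
    intro z hz
    have h1 : |z.re| ≤ ‖z‖ := Complex.abs_re_le_norm z
    have h3 : ((τ:ℂ)^2 * z).re = τ^2 * z.re := by
      have h : ((τ:ℂ))^2 = ((τ^2 : ℝ) : ℂ) := by push_cast; ring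
      rw [h, Complex.re_ofReal_mul]
    have h4 : τ^2 * z.re ≤ τ^2 * |z.re| := mul_le_mul_of_nonneg_left (le_abs_self _) hτ0
    have h5 : τ^2 * |z.re| ≤ 1 * |z.re| := mul_le_mul_of_nonneg_right hτlt.le (abs_nonneg _)
    simp only [Complex.sub_re, Complex.one_re, h3]
    linarith only [h4, h5, h1, hz]
  have hslit : ∀ z : ℂ, ‖z‖ < 1 → (1 - z) * (1 - (τ:ℂ)^2*z) ∈ Complex.slitPlane :=
    fun z hz => mul_mem_slitPlane_of_re_pos (hre1 z hz) (hre2 z hz)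
  have hqne : ∀ z : ℂ, ‖z‖ < 1 → (1 - z) * (1 - (τ:ℂ)^2*z) ≠ 0 :=
    fun z hz => Complex.slitPlane_ne_zero (hslit z hz)
  have hwsq : ∀ z : ℂ, ‖z‖ < 1 →
      ((1 - z) * (1 - (τ:ℂ)^2*z)) ^ ((1:ℂ)/2) * ((1 - z) * (1 - (τ:ℂ)^2*z)) ^ ((1:ℂ)/2)
        = (1 - z) * (1 - (τ:ℂ)^2*z) := by
    intro z hz
    rw [← Complex.cpow_add _ _ (hqne z hz)]
    norm_num
  have habs1 : ∀ z : ℂ, ‖z‖ < 1 → ‖1 - z‖ < 2 := by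
    intro z hz
    have h := norm_sub_le (1:ℂ) z
    simp only [norm_one] at h
    linarith only [h, hz]
  have habs2 : ∀ z : ℂ, ‖z‖ < 1 → ‖1 - (τ:ℂ)^2*z‖ < 2 := by
    intro z hz
    have h := norm_sub_le (1:ℂ) ((τ:ℂ)^2*z)
    simp only [norm_one] at h
    have h2 : ‖(τ:ℂ)^2*z‖ = τ^2 * ‖z‖ := by
      rw [norm_mul, norm_pow, Complex.norm_real, Real.norm_eq_abs, sq_abs]
    have h3 : τ^2 * ‖z‖ ≤ 1 * ‖z‖ :=
      mul_le_mul_of_nonneg_right hτlt.le (norm_nonneg _)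
    rw [h2] at h
    linarith only [h, h3, hz]
  have habsw : ∀ z : ℂ, ‖z‖ < 1 →
      ‖((1 - z) * (1 - (τ:ℂ)^2*z)) ^ ((1:ℂ)/2)‖ < 2 := by
    intro z hz
    have h := congrArg (‖·‖) (hwsq z hz)
    rw [norm_mul, norm_mul] at h
    have h4 : ‖1 - z‖ * ‖1 - (τ:ℂ)^2*z‖ < 2*2 :=
      mul_lt_mul'' (habs1 z hz) (habs2 z hz) (norm_nonneg _) (norm_nonneg _)
    by_contra hcon
    push_neg at hcon
    have h5 : (2:ℝ)*2 ≤ ‖((1 - z) * (1 - (τ:ℂ)^2*z)) ^ ((1:ℂ)/2)‖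
        * ‖((1 - z) * (1 - (τ:ℂ)^2*z)) ^ ((1:ℂ)/2)‖ :=
      mul_le_mul hcon hcon (by norm_num) (le_trans (by norm_num) hcon)
    linarith only [h, h4, h5]
  have habsc : |τνε| < 1 := abs_lt.mpr ⟨by linarith, hclt1⟩
  have hlin : ∀ z : ℂ, ‖z‖ < 1 → ‖1 + (τνε:ℂ)*z‖ < 2 := by
    intro z hz
    have h := norm_add_le (1:ℂ) ((τνε:ℂ)*z)
    simp only [norm_one] at h
    have h2 : ‖(τνε:ℂ)*z‖ = |τνε| * ‖z‖ := by
      rw [norm_mul, Complex.norm_real, Real.norm_eq_abs]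
    have h3 : |τνε| * ‖z‖ ≤ 1 * ‖z‖ :=
      mul_le_mul_of_nonneg_right habsc.le (norm_nonneg _)
    rw [h2] at h
    linarith only [h, h3, hz]
  have hg0 : g 0 = 0 := by
    have : g 0 = 1 + (τνε:ℂ)*0 - ((1 - 0) * (1 - (τ:ℂ)^2*0)) ^ ((1:ℂ)/2) := rfl
    rw [this]
    norm_num [Complex.one_cpow]
  have hgdiff : DifferentiableOn ℂ g (ball 0 1) := by
    intro z hz
    rw [mem_ball_zero_iff] at hz
    apply DifferentiableAt.differentiableWithinAt
    rw [hgdef]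
    apply DifferentiableAt.sub
    · exact (differentiableAt_const _).add ((differentiableAt_const _).mul differentiableAt_id)
    · exact DifferentiableAt.cpow (by fun_prop) (differentiableAt_const _) (hslit z hz)
  have hmaps : MapsTo g (ball (0:ℂ) 1) (ball (g 0) 4) := by
    intro z hz
    rw [mem_ball_zero_iff] at hz
    rw [hg0, mem_ball_zero_iff]
    have hgz : g z = (1 + (τνε:ℂ)*z) - ((1 - z) * (1 - (τ:ℂ)^2*z)) ^ ((1:ℂ)/2) := rfl
    rw [hgz]
    have h := norm_sub_le (1 + (τνε:ℂ)*z) (((1 - z) * (1 - (τ:ℂ)^2*z)) ^ ((1:ℂ)/2))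
    have hA1 := hlin z hz
    have hA2 := habsw z hz
    linarith only [h, hA1, hA2]
  have hschwarz : ∀ z : ℂ, ‖z‖ < 1 → ‖g z‖ ≤ 4 * ‖z‖ := by
    intro z hz
    have hzball : z ∈ ball (0:ℂ) 1 := by
      rw [mem_ball_zero_iff]; exact hz
    have h := Complex.dist_le_div_mul_dist_of_mapsTo_ball hgdiff (hmaps.mono_right ball_subset_closedBall) hzball
    rw [hg0] at h
    simp only [Complex.dist_eq, sub_zero] at h
    norm_num at h
    exact h
  have hpoly : ∀ zz : ℂ, (1 + (τνε:ℂ)*zz)^2 - (1 - zz)*(1 - (τ:ℂ)^2*zz)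
      = ((2*K/d^2 : ℝ) : ℂ) * zz * (1 - ((ν^2/d^2 : ℝ) : ℂ)*zz) := by
    intro zz
    have e1C : (d:ℂ)^2*(2*(τνε:ℂ) + 1 + (τ:ℂ)^2) = 2*(K:ℂ) := by exact_mod_cast er1
    have e2C : ((d:ℂ)^2)^2*((τνε:ℂ)^2 - (τ:ℂ)^2) = -(2*(K:ℂ)*(ν:ℂ)^2) := by
      exact_mod_cast er2
    have hdC : (d:ℂ) ≠ 0 := Complex.ofReal_ne_zero.mpr hd.ne'
    push_cast
    field_simp
    linear_combination (zz*(d:ℂ)^2)*e1C + zz^2*e2C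
  have hmain : ∀ z : ℂ, ‖z‖ < 1 → (1 + τνε)^2/4 ≤ ‖f z‖ := by
    intro z hz
    rcases eq_or_ne z 0 with rfl | hz0
    · rw [hfeq 0]
      have h2 : (1:ℂ) + (τνε:ℂ)*0 + ((1 - 0) * (1 - (τ:ℂ)^2*0)) ^ ((1:ℂ)/2) = 2 := by
        norm_num [Complex.one_cpow]
      rw [h2]
      have h3 : ‖(2:ℂ)‖ = 2 := by norm_num
      rw [h3]
      have hlt : 1 + τνε < 2 := by linarith only [hclt1]
      have hsq : (1+τνε)*(1+τνε) < 2*2 := mul_lt_mul'' hlt hlt hcpos.le hcpos.le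
      have h5 : (1+τνε)^2 < 4 := by rw [pow_two]; linarith only [hsq]
      linarith only [h5]
    · have hgz : g z = 1 + (τνε:ℂ)*z - ((1 - z) * (1 - (τ:ℂ)^2*z)) ^ ((1:ℂ)/2) := rfl
      have hprod : f z * g z = ((2*K/d^2 : ℝ):ℂ) * z * (1 - ((ν^2/d^2:ℝ):ℂ)*z) := by
        rw [hfeq z, hgz]
        linear_combination hpoly z - hwsq z hz
      have hKd : (0:ℝ) < 2*K/d^2 := div_pos (by linarith) hd2
      have habs : ‖f z‖ * ‖g z‖
          = (2*K/d^2) * ‖z‖ * ‖1 - ((ν^2/d^2:ℝ):ℂ)*z‖ := by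
        rw [← norm_mul, hprod, norm_mul, norm_mul, Complex.norm_real, Real.norm_eq_abs, abs_of_pos hKd]
      have hm : (d^2 - ν^2)/d^2 ≤ ‖1 - ((ν^2/d^2:ℝ):ℂ)*z‖ := by
        have he : ((1:ℂ) - ((ν^2/d^2:ℝ):ℂ)*z) + ((ν^2/d^2:ℝ):ℂ)*z = 1 := by ring
        have htri : (1:ℝ) ≤ ‖1 - ((ν^2/d^2:ℝ):ℂ)*z‖
            + ‖((ν^2/d^2:ℝ):ℂ)*z‖ := by
          calc (1:ℝ) = ‖((1:ℂ) - ((ν^2/d^2:ℝ):ℂ)*z) + ((ν^2/d^2:ℝ):ℂ)*z‖ := by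
                rw [he, norm_one]
            _ ≤ _ := norm_add_le _ _
        have h2 : ‖((ν^2/d^2:ℝ):ℂ)*z‖ = (ν^2/d^2)*‖z‖ := by
          rw [norm_mul, Complex.norm_real, Real.norm_eq_abs, abs_of_nonneg (by positivity)]
        have h3 : (ν^2/d^2)*‖z‖ ≤ ν^2/d^2 * 1 :=
          mul_le_mul_of_nonneg_left hz.le (by positivity)
        have h4 : (d^2 - ν^2)/d^2 = 1 - ν^2/d^2 := by field_simp
        rw [h2] at htri
        rw [h4]
        linarith only [htri, h3]
      have habsz : 0 < ‖z‖ := norm_pos_iff.mpr hz0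
      have hfnn : 0 ≤ ‖f z‖ := norm_nonneg _
      have step : ((2*K/d^2) * ((d^2-ν^2)/d^2)) * ‖z‖
          ≤ (4 * ‖f z‖) * ‖z‖ := by
        calc ((2*K/d^2) * ((d^2-ν^2)/d^2)) * ‖z‖
            = (2*K/d^2) * ‖z‖ * ((d^2-ν^2)/d^2) := by ring
          _ ≤ (2*K/d^2) * ‖z‖ * ‖1 - ((ν^2/d^2:ℝ):ℂ)*z‖ :=
              mul_le_mul_of_nonneg_left hm (mul_nonneg hKd.le (norm_nonneg z))
          _ = ‖f z‖ * ‖g z‖ := habs.symm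
          _ ≤ ‖f z‖ * (4 * ‖z‖) :=
              mul_le_mul_of_nonneg_left (hschwarz z hz) hfnn
          _ = (4 * ‖f z‖) * ‖z‖ := by ring
      have step2 : (2*K/d^2) * ((d^2-ν^2)/d^2) ≤ 4 * ‖f z‖ :=
        le_of_mul_le_mul_right step habsz
      have heq : (1 + τνε)^2 = (2*K/d^2) * ((d^2-ν^2)/d^2) := by
        field_simp
        linear_combination hcK
      rw [div_le_iff₀ (by norm_num : (0:ℝ) < 4)]
      calc (1 + τνε)^2 = (2*K/d^2) * ((d^2-ν^2)/d^2) := heq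
        _ ≤ 4 * ‖f z‖ := step2
        _ = ‖f z‖ * 4 := by ring
  intro z hz
  exact ⟨hmain z hz, hsecond⟩
end

section
/- Let 0 < s < d, set ξ = (d²+s²)/(2d²) and τ = s/d. For complex z with |z| < 1 define g(z) = 1 − ξz + ((1−z)(1−τ²z))^{1/2} with the branch of the square root positive on (−1,1). Then |g(z)| ≥ (1 − τ²)²/4 = (d²−s²)²/(4d⁴). -/
lemma re_cpow_half_nonneg (u : ℂ) : 0 ≤ (u ^ ((1:ℂ)/2)).re := by
  rcases eq_or_ne u 0 with h | h
  · simp [h, Complex.zero_cpow (by norm_num : (1:ℂ)/2 ≠ 0)]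
  · rw [Complex.cpow_def_of_ne_zero h, Complex.exp_re]
    apply mul_nonneg (Real.exp_pos _).le
    apply Real.cos_nonneg_of_mem_Icc
    have him : (Complex.log u * ((1:ℂ)/2)).im = u.arg * (1/2) := by
      simp [Complex.mul_im, Complex.log_im]
    rw [him]
    constructor
    · have := Complex.neg_pi_lt_arg u
      nlinarith [Real.pi_pos]
    · have := Complex.arg_le_pi u
      nlinarith [Real.pi_pos]

theorem g_lower_bound
    (s d : ℝ) (hs : 0 < s) (hsd : s < d) :
    let ξ : ℝ := (d^2 + s^2) / (2*d^2)
    let τ : ℝ := s / d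
    let g : ℂ → ℂ := fun z =>
      1 - (ξ : ℂ) * z + ((1 - z) * (1 - (τ : ℂ)^2 * z)) ^ ((1 : ℂ)/2)
    ∀ z : ℂ, ‖z‖ < 1 →
      (d^2 - s^2)^2 / (4*d^4) ≤ ‖g z‖ ∧
      (1 - τ^2)^2 / 4 = (d^2 - s^2)^2 / (4*d^4) := by
  intro ξ τ g z hz
  have hd : 0 < d := hs.trans hsd
  have hd0 : d ≠ 0 := hd.ne'
  have hτ0 : 0 < τ := div_pos hs hd
  have hτ1 : τ < 1 := (div_lt_one hd).2 hsd
  have hξ : ξ = (1 + τ^2)/2 := by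
    show (d^2 + s^2) / (2*d^2) = (1 + (s/d)^2)/2
    field_simp
  have heq : (1 - τ^2)^2/4 = (d^2-s^2)^2/(4*d^4) := by
    show (1 - (s/d)^2)^2/4 = (d^2-s^2)^2/(4*d^4)
    field_simp
  refine ⟨?_, heq⟩
  have hw : 0 ≤ (((1 - z) * (1 - (τ:ℂ)^2 * z)) ^ ((1:ℂ)/2)).re :=
    re_cpow_half_nonneg _
  have hre : (g z).re = 1 - ξ * z.re + (((1 - z) * (1 - (τ:ℂ)^2 * z)) ^ ((1:ℂ)/2)).re := by
    simp [g, Complex.add_re, Complex.sub_re, Complex.mul_re]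
  have hzre : z.re ≤ ‖z‖ := Complex.re_le_norm z
  have hξpos : 0 < ξ := by rw [hξ]; positivity
  calc (d^2-s^2)^2/(4*d^4) = (1-τ^2)^2/4 := heq.symm
    _ ≤ (1-τ^2)/2 := by
        have hx : 0 < 1 - τ^2 := by nlinarith
        have hx2 : 1 - τ^2 < 1 := by nlinarith
        nlinarith [mul_lt_of_lt_one_left hx hx2]
    _ ≤ (g z).re := by rw [hre, hξ]; nlinarith
    _ ≤ ‖g z‖ := Complex.re_le_norm _
end

section
/- Let 0 < s < d, 0 ≤ |ν| < s, ε = ±1, and τ(ν,ε) = (ε√((d²−ν²)(s²−ν²)) − ν²)/d². Then |2d²τ(ν,ε) + s² + d²| ≤ (s+d)² and |d⁴τ(ν,ε)² − s²d²| ≤ 3ν²(s+d)². -/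
set_option maxHeartbeats 1000000


theorem tau_quadratic_bounds
    (s d ν ε : ℝ) (hs : 0 < s) (hsd : s < d) (hν : |ν| < s)
    (hε : ε = 1 ∨ ε = -1) :
    let τνε : ℝ := (ε * Real.sqrt ((d^2 - ν^2)*(s^2 - ν^2)) - ν^2) / d^2
    |2*d^2*τνε + s^2 + d^2| ≤ (s + d)^2 ∧
    |d^4*τνε^2 - s^2*d^2| ≤ 3*ν^2*(s + d)^2 := by
  intro τνε
  have hd : 0 < d := hs.trans hsd
  have hν2s : ν^2 < s^2 := by nlinarith [abs_nonneg ν, sq_abs ν]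
  have hprod : 0 ≤ (d^2 - ν^2)*(s^2 - ν^2) := mul_nonneg (by nlinarith) (by nlinarith)
  set R := Real.sqrt ((d^2 - ν^2)*(s^2 - ν^2)) with hR
  have hR0 : 0 ≤ R := Real.sqrt_nonneg _
  have hRsq : R^2 = (d^2 - ν^2)*(s^2 - ν^2) := Real.sq_sqrt hprod
  have hRle : R ≤ s*d := by nlinarith [mul_pos hs hd, sq_nonneg ν]
  have hd2 : (d:ℝ)^2 ≠ 0 := by positivity
  have hkey : d^2 * τνε = ε*R - ν^2 := by
    show d^2 * ((ε*R - ν^2)/d^2) = ε*R - ν^2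
    field_simp
  have h2 : d^4 * τνε^2 = (ε*R - ν^2)^2 := by
    have : d^4 * τνε^2 = (d^2 * τνε)^2 := by ring
    rw [this, hkey]
  rcases hε with h | h <;> subst h <;>
    constructor <;> rw [abs_le] <;> constructor <;>
    nlinarith [hkey, h2, hRsq, hRle, hR0, hν2s, sq_nonneg ν, sq_nonneg (s+d), mul_pos hs hd]
end

section
/- Let 0 < s < d and for real λ with |λ| ≥ d define w(λ)² = ((d²−s²)/2)/(λ² − (s²+d²)/2 + √((λ²−s²)(λ²−d²))). Then for any real ν with |ν| < s, (λ−ν)²·w(λ)² ≤ 2d⁴/(d²−s²)·(1 + |ν|/d)², i.e., |(λ−ν)w(λ)| ≤ (√2 d²/√(d²−s²))·(1 + |ν|/d). -/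
theorem weighted_floquet_bound
    (s d ν : ℝ) (hs : 0 < s) (hsd : s < d) (hν : |ν| < s) :
    ∀ lam : ℝ, d ≤ |lam| →
      let w2 : ℝ := ((d^2 - s^2)/2) /
        (lam^2 - (s^2 + d^2)/2 + Real.sqrt ((lam^2 - s^2)*(lam^2 - d^2)))
      (lam - ν)^2 * w2 ≤ 2*d^4/(d^2 - s^2) * (1 + |ν|/d)^2 ∧
      |lam - ν| * Real.sqrt w2 ≤ Real.sqrt 2 * d^2 / Real.sqrt (d^2 - s^2) * (1 + |ν|/d) := by
  intro lam hlam
  intro w2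
  have hd : 0 < d := hs.trans hsd
  have hd2 : (0:ℝ) < d^2 - s^2 := by nlinarith
  have hL : d^2 ≤ lam^2 := by
    have := pow_le_pow_left₀ hd.le hlam 2
    rwa [sq_abs] at this
  set R := Real.sqrt ((lam^2 - s^2)*(lam^2 - d^2)) with hRdef
  have hR : 0 ≤ R := Real.sqrt_nonneg _
  set Dv := lam^2 - (s^2 + d^2)/2 + R with hDdef
  have hD0 : 0 < Dv := by simp only [hDdef]; nlinarith
  have hw2 : 0 ≤ w2 := div_nonneg (by nlinarith) hD0.le
  have hε : 0 ≤ |ν|/d := div_nonneg (abs_nonneg _) hd.le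
  -- key: lam^2 * w2 ≤ 2 d^4 / (d^2 - s^2)
  have key : lam^2 * w2 ≤ 2*d^4/(d^2 - s^2) := by
    have : lam^2 * w2 = (lam^2 * ((d^2 - s^2)/2)) / Dv := by
      simp only [w2]; ring
    rw [this, div_le_div_iff₀ hD0 hd2, hDdef]
    have h1 : (0:ℝ) ≤ 4*d^4 - (d^2 - s^2)^2 := by nlinarith
    nlinarith [mul_nonneg (sub_nonneg.2 hL) h1,
      mul_nonneg (by positivity : (0:ℝ) ≤ 2*d^4) hR,
      mul_nonneg (mul_nonneg (sq_nonneg d) hd2.le) (by positivity : (0:ℝ) ≤ d^2 + s^2)]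
  -- step A: (lam - ν)^2 ≤ lam^2 * (1 + |ν|/d)^2
  have habs : |lam - ν| ≤ |lam| * (1 + |ν|/d) := by
    have h1 : |lam - ν| ≤ |lam| + |ν| := abs_sub _ _
    have h2 : |ν| ≤ |lam| * (|ν|/d) := by
      have hd' : d * (|ν|/d) = |ν| := by field_simp
      calc |ν| = d * (|ν|/d) := hd'.symm
        _ ≤ |lam| * (|ν|/d) := mul_le_mul_of_nonneg_right hlam hε
    calc |lam - ν| ≤ |lam| + |ν| := h1
      _ ≤ |lam| + |lam| * (|ν|/d) := by linarith
      _ = |lam| * (1 + |ν|/d) := by ring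
  have hA : (lam - ν)^2 ≤ lam^2 * (1 + |ν|/d)^2 := by
    have := mul_le_mul habs habs (abs_nonneg _) (by positivity)
    calc (lam - ν)^2 = |lam - ν| * |lam - ν| := by rw [← sq_abs, sq]
      _ ≤ (|lam| * (1 + |ν|/d)) * (|lam| * (1 + |ν|/d)) := this
      _ = lam^2 * (1 + |ν|/d)^2 := by rw [← sq_abs lam]; ring
  have first : (lam - ν)^2 * w2 ≤ 2*d^4/(d^2 - s^2) * (1 + |ν|/d)^2 := by
    calc (lam - ν)^2 * w2 ≤ (lam^2 * (1 + |ν|/d)^2) * w2 :=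
          mul_le_mul_of_nonneg_right hA hw2
      _ = (1 + |ν|/d)^2 * (lam^2 * w2) := by ring
      _ ≤ (1 + |ν|/d)^2 * (2*d^4/(d^2 - s^2)) :=
          mul_le_mul_of_nonneg_left key (by positivity)
      _ = 2*d^4/(d^2 - s^2) * (1 + |ν|/d)^2 := by ring
  refine ⟨first, ?_⟩
  set A := |lam - ν| * Real.sqrt w2 with hAdef
  set B := Real.sqrt 2 * d^2 / Real.sqrt (d^2 - s^2) * (1 + |ν|/d) with hBdef
  have hA0 : 0 ≤ A := mul_nonneg (abs_nonneg _) (Real.sqrt_nonneg _)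
  have hB0 : 0 ≤ B := by
    apply mul_nonneg
    apply div_nonneg (mul_nonneg (Real.sqrt_nonneg _) (by positivity)) (Real.sqrt_nonneg _)
    linarith
  have hAsq : A^2 = (lam - ν)^2 * w2 := by
    rw [hAdef, mul_pow, sq_abs, Real.sq_sqrt hw2]
  have hBsq : B^2 = 2*d^4/(d^2 - s^2) * (1 + |ν|/d)^2 := by
    rw [hBdef, mul_pow, div_pow, mul_pow, Real.sq_sqrt (by norm_num : (0:ℝ) ≤ 2),
      Real.sq_sqrt hd2.le]
    ring
  nlinarith [first, hAsq, hBsq, sq_nonneg (A - B), sq_nonneg (A + B)]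
end
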